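/- Let R₁ be the adjacency matrix of a finite directed graph on N vertices (entries in {0,1}). Then the least {0,1}-matrix solution R₂* of R₂ = min₁(R₁ + R₁R₂) satisfies: (R₂*)_{ij} = 1 if and only if there is a directed path of length ≥ 1 from vertex i to vertex j in the graph, i.e., R₂* is the adjacency matrix of the transitive closure of the edge relation. -/

import Mathlib

open Matrix

/-- entrywise `min₁(t) = min(t,1)` -/
noncomputable def min1M {N : ℕ} (A : Matrix (Fin N) (Fin N) ℝ) :
    Matrix (Fin N) (Fin N) ℝ := Matrix.of fun i j => min (A i j) 1

/-!
Every nonnegative solution `R` of `R = min₁(R₁ + R₁ R)` equals `1` along every path: an edge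
`i → j` makes the argument of `min₁` at least `1`, and so does an edge `i → c` followed by
`R c j = 1`, since `(R₁ R) i j ≥ R₁ i c * R c j`. Conversely the indicator matrix of the
transitive closure is itself a `{0,1}`-solution, so the least solution both dominates it and is
dominated by it.
-/

open Relation

namespace Matrix

variable {n α : Type*}

section ZeroOne

variable [Zero α] [One α]

def IsZeroOne (A : Matrix n n α) : Prop := ∀ i j, A i j = 0 ∨ A i j = 1

theorem IsZeroOne.nonneg [Preorder α] [ZeroLEOneClass α] {A : Matrix n n α} (hA : IsZeroOne A)
    (i j : n) : 0 ≤ A i j := by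
  rcases hA i j with h | h <;> simp [h]

open scoped Classical in
noncomputable def transClosureMatrix (E : Matrix n n α) : Matrix n n α :=
  of fun i j => if TransGen (fun a b => E a b = 1) i j then 1 else 0

theorem transClosureMatrix_isZeroOne (E : Matrix n n α) : IsZeroOne (transClosureMatrix E) :=
  fun i j => by
    simp only [transClosureMatrix, of_apply]
    split_ifs <;> simp

theorem transClosureMatrix_apply_eq_one_iff [NeZero (1 : α)] (E : Matrix n n α) (i j : n) :
    transClosureMatrix E i j = 1 ↔ TransGen (fun a b => E a b = 1) i j := by
  simp only [transClosureMatrix, of_apply]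
  split_ifs with h <;> simp [h]

end ZeroOne

variable [Fintype n] [Semiring α] [LinearOrder α]

def IsMinOneSolution (E A : Matrix n n α) : Prop := ∀ i j, A i j = min (E i j + (E * A) i j) 1

theorem IsMinOneSolution.apply_eq_one {E A : Matrix n n α} (hA : IsMinOneSolution E A)
    {i j : n} (h : 1 ≤ E i j + (E * A) i j) : A i j = 1 := by
  rw [hA i j, min_eq_right h]

variable [IsOrderedRing α]

theorem mul_apply_nonneg {A B : Matrix n n α} (hA : ∀ i j, 0 ≤ A i j)
    (hB : ∀ i j, 0 ≤ B i j) (i j : n) :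
    0 ≤ (A * B) i j :=
  Finset.sum_nonneg fun k _ => mul_nonneg (hA i k) (hB k j)

theorem mul_apply_le_mul_apply {A B : Matrix n n α} (hA : ∀ i j, 0 ≤ A i j)
    (hB : ∀ i j, 0 ≤ B i j) (i j k : n) :
    A i k * B k j ≤ (A * B) i j :=
  Finset.single_le_sum (f := fun k => A i k * B k j) (fun k _ => mul_nonneg (hA i k) (hB k j))
    (Finset.mem_univ k)

theorem one_le_add_mul_apply_of_eq_one {E A : Matrix n n α} (hE : ∀ i j, 0 ≤ E i j)
    (hA : ∀ i j, 0 ≤ A i j) {i j : n} (hij : E i j = 1) : 1 ≤ E i j + (E * A) i j :=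
  hij ▸ le_add_of_nonneg_right (mul_apply_nonneg hE hA i j)

theorem one_le_add_mul_apply_of_eq_one_of_eq_one {E A : Matrix n n α} (hE : ∀ i j, 0 ≤ E i j)
    (hA : ∀ i j, 0 ≤ A i j) {i c j : n} (hic : E i c = 1) (hcj : A c j = 1) :
    1 ≤ E i j + (E * A) i j := by
  have hpath := mul_apply_le_mul_apply hE hA i j c
  rw [hic, hcj, one_mul] at hpath
  exact le_add_of_nonneg_of_le (hE i j) hpath

theorem IsMinOneSolution.apply_eq_one_of_transGen {E A : Matrix n n α}
    (hA : IsMinOneSolution E A) (hE : ∀ i j, 0 ≤ E i j) (hA₀ : ∀ i j, 0 ≤ A i j) {i j : n}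
    (hij : TransGen (fun a b => E a b = 1) i j) : A i j = 1 := by
  induction hij using TransGen.head_induction_on with
  | single hedge => exact hA.apply_eq_one (one_le_add_mul_apply_of_eq_one hE hA₀ hedge)
  | head hac _ hcj =>
    exact hA.apply_eq_one (one_le_add_mul_apply_of_eq_one_of_eq_one hE hA₀ hac hcj)

theorem transClosureMatrix_isMinOneSolution {E : Matrix n n α} (hE : IsZeroOne E) :
    IsMinOneSolution E (transClosureMatrix E) := by
  classical
  set T := transClosureMatrix E
  have hT₀ : ∀ i j, 0 ≤ T i j := (transClosureMatrix_isZeroOne E).nonneg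
  intro i j
  by_cases hij : TransGen (fun a b => E a b = 1) i j
  · rw [show T i j = 1 from if_pos hij, eq_comm, min_eq_right_iff]
    obtain ⟨c, hic, hcj⟩ := TransGen.head'_iff.mp hij
    rcases reflTransGen_iff_eq_or_transGen.mp hcj with rfl | hcj
    · exact one_le_add_mul_apply_of_eq_one hE.nonneg hT₀ hic
    · exact one_le_add_mul_apply_of_eq_one_of_eq_one hE.nonneg hT₀ hic (if_pos hcj)
  · have hEij : E i j = 0 := (hE i j).resolve_right fun h => hij (.single h)
    have hET : (E * T) i j = 0 := by
      refine Finset.sum_eq_zero fun k _ => show E i k * T k j = 0 from ?_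
      rcases hE i k with hik | hik
      · rw [hik, zero_mul]
      · rw [show T k j = 0 from if_neg fun hkj => hij (.head hik hkj), mul_zero]
    rw [show T i j = 0 from if_neg hij, hEij, hET, add_zero, min_eq_left zero_le_one]

theorem transClosureMatrix_apply_le {E A : Matrix n n α} (hE : ∀ i j, 0 ≤ E i j)
    (hA : IsMinOneSolution E A) (hA₀ : ∀ i j, 0 ≤ A i j) (i j : n) :
    transClosureMatrix E i j ≤ A i j := by
  classical
  simp only [transClosureMatrix, of_apply]
  split_ifs with hij
  · exact (hA.apply_eq_one_of_transGen hE hA₀ hij).ge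
  · exact hA₀ i j

end Matrix

theorem eq_min1M_iff_isMinOneSolution {N : ℕ} {E A : Matrix (Fin N) (Fin N) ℝ} :
    A = min1M (E + E * A) ↔ IsMinOneSolution E A :=
  ⟨fun h i j => congrFun₂ h i j, fun h => Matrix.ext h⟩

theorem least_solution_is_transitive_closure {N : ℕ}
    (R1 : Matrix (Fin N) (Fin N) ℝ)
    (hR1 : ∀ i j, R1 i j = 0 ∨ R1 i j = 1)
    (R2star : Matrix (Fin N) (Fin N) ℝ)
    (hR2star01 : ∀ i j, R2star i j = 0 ∨ R2star i j = 1)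
    (hsol : R2star = min1M (R1 + R1 * R2star))
    (hleast : ∀ R : Matrix (Fin N) (Fin N) ℝ,
      (∀ i j, R i j = 0 ∨ R i j = 1) →
      R = min1M (R1 + R1 * R) →
      ∀ i j, R2star i j ≤ R i j) :
    ∀ i j, R2star i j = 1 ↔ Relation.TransGen (fun a b => R1 a b = 1) i j := by
  have hclosure_sol := transClosureMatrix_isMinOneSolution (E := R1) hR1
  have hle : ∀ i j, R2star i j ≤ transClosureMatrix R1 i j :=
    hleast _ (transClosureMatrix_isZeroOne R1) (eq_min1M_iff_isMinOneSolution.mpr hclosure_sol)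
  have hge : ∀ i j, transClosureMatrix R1 i j ≤ R2star i j :=
    transClosureMatrix_apply_le (IsZeroOne.nonneg hR1) (eq_min1M_iff_isMinOneSolution.mp hsol)
      (IsZeroOne.nonneg hR2star01)
  intro i j
  rw [le_antisymm (hle i j) (hge i j)]
  exact transClosureMatrix_apply_eq_one_iff R1 i j
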